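/- Let ρ(x) = (−7 − 9^x + 4^{x+1}) / (2(4 − 4^x)) for x ∈ (0,1). Then the function H ↦ e^{−1}·sin(ρ(H)) is strictly increasing on (0,1), and it maps (0,1) bijectively onto the open interval (sin(−2/3)/e, sin(−2 + (9/8)·(ln 9/ln 4))/e). In particular the interval (−2/3, −2 + (9/8)·(ln 9/ln 4)) is contained in (−π/2, 0), where sine is strictly increasing and negative. -/
import Mathlib

open Real Set Filter Topology

noncomputable def cq : ℝ := Real.log 9 / Real.log 4

noncomputable def rho (H : ℝ) : ℝ :=
  (-7 - (9 : ℝ) ^ H + (4 : ℝ) ^ (H + 1)) / (2 * (4 - (4 : ℝ) ^ H))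

lemma log4_pos : 0 < Real.log 4 := Real.log_pos (by norm_num)

lemma cq_gt_one : 1 < cq := by
  rw [cq, lt_div_iff₀ log4_pos, one_mul]
  exact Real.log_lt_log (by norm_num) (by norm_num)

lemma four_rpow_cq : (4 : ℝ) ^ cq = 9 := by
  rw [cq, Real.rpow_def_of_pos (by norm_num), mul_comm,
    div_mul_cancel₀ _ (ne_of_gt log4_pos), Real.exp_log (by norm_num)]

lemma nine_rpow (x : ℝ) : (9 : ℝ) ^ x = ((4 : ℝ) ^ x) ^ cq := by
  rw [← four_rpow_cq, ← Real.rpow_mul (by norm_num), ← Real.rpow_mul (by norm_num), mul_comm]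

lemma four_rpow_lt (x : ℝ) (hx : x < 1) : (4 : ℝ) ^ x < 4 := by
  have : (4 : ℝ) ^ x < (4 : ℝ) ^ (1 : ℝ) :=
    (Real.rpow_lt_rpow_left_iff (by norm_num)).mpr hx
  simpa using this

lemma one_lt_four_rpow (x : ℝ) (hx : 0 < x) : 1 < (4 : ℝ) ^ x := by
  have : (4 : ℝ) ^ (0 : ℝ) < (4 : ℝ) ^ x :=
    (Real.rpow_lt_rpow_left_iff (by norm_num)).mpr hx
  simpa using this

lemma rho_eq (x : ℝ) (hx : x < 1) :
    rho x = -2 + (1 / 2) * slope (fun t : ℝ => t ^ cq) 4 ((4 : ℝ) ^ x) := by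
  have hu : (4 : ℝ) ^ x < 4 := four_rpow_lt x hx
  have hne : (4 : ℝ) ^ x - 4 ≠ 0 := by linarith
  have hne' : (4 : ℝ) - (4 : ℝ) ^ x ≠ 0 := by linarith
  rw [rho, slope_def_field, nine_rpow]
  have h41 : (4 : ℝ) ^ (x + 1) = (4 : ℝ) ^ x * 4 := by
    rw [Real.rpow_add (by norm_num), Real.rpow_one]
  rw [h41, four_rpow_cq]
  field_simp
  ring

lemma rho_strictMono : StrictMonoOn rho (Set.Ioo (0 : ℝ) 1) := by
  intro x hx y hy hxy
  rw [rho_eq x hx.2, rho_eq y hy.2]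
  have hux : (1 : ℝ) < (4 : ℝ) ^ x := one_lt_four_rpow x hx.1
  have huy : (1 : ℝ) < (4 : ℝ) ^ y := one_lt_four_rpow y hy.1
  have huxy : (4 : ℝ) ^ x < (4 : ℝ) ^ y :=
    (Real.rpow_lt_rpow_left_iff (by norm_num)).mpr hxy
  have h4x : (4 : ℝ) ^ x < 4 := four_rpow_lt x hx.2
  have h4y : (4 : ℝ) ^ y < 4 := four_rpow_lt y hy.2
  have key := (strictConvexOn_rpow cq_gt_one).secant_strict_mono
    (a := (4 : ℝ)) (x := (4 : ℝ) ^ x) (y := (4 : ℝ) ^ y)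
    (Set.mem_Ici.mpr (by norm_num))
    (Set.mem_Ici.mpr (by positivity))
    (Set.mem_Ici.mpr (by positivity))
    (ne_of_lt h4x) (ne_of_lt h4y) huxy
  simp only [slope_def_field]
  linarith

lemma rho_tendsto_one :
    Tendsto rho (𝓝[<] (1 : ℝ)) (𝓝 (-2 + 9 / 8 * (Real.log 9 / Real.log 4))) := by
  have hder : HasDerivAt (fun t : ℝ => t ^ cq) (cq * (4 : ℝ) ^ (cq - 1)) 4 :=
    Real.hasDerivAt_rpow_const (Or.inl (by norm_num))
  have hslope := hasDerivAt_iff_tendsto_slope.mp hder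
  have hcont : Continuous (fun x : ℝ => (4 : ℝ) ^ x) :=
    Continuous.rpow continuous_const continuous_id (fun x => Or.inl (by norm_num))
  have hu : Tendsto (fun x : ℝ => (4 : ℝ) ^ x) (𝓝[<] (1 : ℝ)) (𝓝[≠] (4 : ℝ)) := by
    rw [tendsto_nhdsWithin_iff]
    constructor
    · have : Tendsto (fun x : ℝ => (4 : ℝ) ^ x) (𝓝 1) (𝓝 ((4 : ℝ) ^ (1 : ℝ))) :=
        hcont.continuousAt
      simpa using this.mono_left nhdsWithin_le_nhds
    · filter_upwards [self_mem_nhdsWithin] with x hx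
      exact ne_of_lt (four_rpow_lt x hx)
  have hlim : Tendsto rho (𝓝[<] (1 : ℝ)) (𝓝 (-2 + (1 / 2) * (cq * (4 : ℝ) ^ (cq - 1)))) := by
    have := (tendsto_const_nhds (x := (-2 : ℝ))).add
      ((tendsto_const_nhds (x := (1 / 2 : ℝ))).mul (hslope.comp hu))
    refine this.congr' ?_
    filter_upwards [self_mem_nhdsWithin] with x hx
    exact (rho_eq x hx).symm
  have hval : -2 + (1 / 2) * (cq * (4 : ℝ) ^ (cq - 1)) =
      -2 + 9 / 8 * (Real.log 9 / Real.log 4) := by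
    have : (4 : ℝ) ^ (cq - 1) = 9 / 4 := by
      rw [Real.rpow_sub (by norm_num), Real.rpow_one, four_rpow_cq]
    rw [this, cq]
    ring
  rwa [hval] at hlim

lemma rho_cont : ContinuousOn rho (Set.Ioo (0 : ℝ) 1) := by
  have hcont4 : Continuous (fun x : ℝ => (4 : ℝ) ^ x) :=
    Continuous.rpow continuous_const continuous_id (fun x => Or.inl (by norm_num))
  have hcont9 : Continuous (fun x : ℝ => (9 : ℝ) ^ x) :=
    Continuous.rpow continuous_const continuous_id (fun x => Or.inl (by norm_num))
  have hcont41 : Continuous (fun x : ℝ => (4 : ℝ) ^ (x + 1)) :=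
    Continuous.rpow continuous_const (continuous_id.add continuous_const)
      (fun x => Or.inl (by norm_num))
  apply ContinuousOn.div
  · exact ((continuous_const.sub hcont9).add hcont41).continuousOn
  · exact (continuous_const.mul (continuous_const.sub hcont4)).continuousOn
  · intro x hx
    have h4 := four_rpow_lt x hx.2
    exact ne_of_gt (by linarith : (0:ℝ) < 2 * (4 - (4:ℝ) ^ x))

lemma rho_tendsto_zero : Tendsto rho (𝓝[>] (0 : ℝ)) (𝓝 (-2 / 3)) := by
  have hcont4 : Continuous (fun x : ℝ => (4 : ℝ) ^ x) :=
    Continuous.rpow continuous_const continuous_id (fun x => Or.inl (by norm_num))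
  have hcont9 : Continuous (fun x : ℝ => (9 : ℝ) ^ x) :=
    Continuous.rpow continuous_const continuous_id (fun x => Or.inl (by norm_num))
  have hcont41 : Continuous (fun x : ℝ => (4 : ℝ) ^ (x + 1)) :=
    Continuous.rpow continuous_const (continuous_id.add continuous_const)
      (fun x => Or.inl (by norm_num))
  have hc : ContinuousAt rho 0 := by
    apply ContinuousAt.div
    · exact ((continuous_const.sub hcont9).add hcont41).continuousAt
    · exact (continuous_const.mul (continuous_const.sub hcont4)).continuousAt
    · norm_num [Real.rpow_zero]
  have h0 : rho 0 = -2 / 3 := by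
    simp [rho, Real.rpow_zero, zero_add, Real.rpow_one]
    norm_num
  have h1 : Tendsto rho (𝓝[>] (0:ℝ)) (𝓝 (rho 0)) :=
    hc.tendsto.mono_left nhdsWithin_le_nhds
  rwa [h0] at h1

lemma rho_mem (x : ℝ) (hx : x ∈ Set.Ioo (0 : ℝ) 1) :
    rho x ∈ Set.Ioo (-2 / 3 : ℝ) (-2 + 9 / 8 * (Real.log 9 / Real.log 4)) := by
  obtain ⟨hx0, hx1⟩ := hx
  constructor
  · have hm : x / 2 ∈ Set.Ioo (0 : ℝ) 1 := ⟨by linarith, by linarith⟩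
    have h1 : rho (x / 2) < rho x := rho_strictMono hm ⟨hx0, hx1⟩ (by linarith)
    have h2 : -2 / 3 ≤ rho (x / 2) := by
      refine le_of_tendsto rho_tendsto_zero ?_
      filter_upwards [Ioo_mem_nhdsGT_of_mem (show (0 : ℝ) ∈ Set.Ico (0 : ℝ) (x / 2) from
        ⟨le_refl _, by linarith⟩)] with t ht
      exact (rho_strictMono ⟨ht.1, ht.2.trans hm.2⟩ hm ht.2).le
    linarith
  · have hm : (x + 1) / 2 ∈ Set.Ioo (0 : ℝ) 1 := ⟨by linarith, by linarith⟩
    have h1 : rho x < rho ((x + 1) / 2) := rho_strictMono ⟨hx0, hx1⟩ hm (by linarith)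
    have h2 : rho ((x + 1) / 2) ≤ -2 + 9 / 8 * (Real.log 9 / Real.log 4) := by
      refine ge_of_tendsto rho_tendsto_one ?_
      filter_upwards [Ioo_mem_nhdsLT_of_mem (show (1 : ℝ) ∈ Set.Ioc ((x + 1) / 2) 1 from
        ⟨by linarith, le_refl _⟩)] with t ht
      exact (rho_strictMono hm ⟨hm.1.trans ht.1, ht.2⟩ ht.1).le
    linarith

lemma B_neg : -2 + 9 / 8 * (Real.log 9 / Real.log 4) < 0 := by
  have h9 : (9 : ℝ) * Real.log 9 < 16 * Real.log 4 := by
    have h := Real.log_lt_log (show (0 : ℝ) < 9 ^ (9 : ℕ) by norm_num)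
      (show (9 : ℝ) ^ (9 : ℕ) < 4 ^ (16 : ℕ) by norm_num)
    rw [Real.log_pow, Real.log_pow] at h
    push_cast at h
    linarith
  have hlt : Real.log 9 / Real.log 4 < 16 / 9 := by
    rw [div_lt_div_iff₀ log4_pos (by norm_num)]
    linarith
  linarith

lemma A_lt_B : (-2 / 3 : ℝ) < -2 + 9 / 8 * (Real.log 9 / Real.log 4) := by
  have h := rho_mem (1 / 2) ⟨by norm_num, by norm_num⟩
  linarith [h.1, h.2]

/-- with ρ(x) = (−7 − 9^x + 4^(x+1)) / (2(4 − 4^x)), the map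
H ↦ e^(−1)·sin(ρ(H)) is strictly increasing on (0,1) and maps (0,1) bijectively onto
(sin(−2/3)/e, sin(−2 + (9/8)·(ln 9/ln 4))/e); in particular
(−2/3, −2 + (9/8)·(ln 9/ln 4)) ⊆ (−π/2, 0). -/
theorem exp_sin_rho_strictMono_bijOn :
    StrictMonoOn
      (fun H : ℝ => Real.exp (-1) *
        Real.sin ((-7 - (9 : ℝ) ^ H + (4 : ℝ) ^ (H + 1)) / (2 * (4 - (4 : ℝ) ^ H))))
      (Set.Ioo (0 : ℝ) 1) ∧
    Set.BijOn
      (fun H : ℝ => Real.exp (-1) *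
        Real.sin ((-7 - (9 : ℝ) ^ H + (4 : ℝ) ^ (H + 1)) / (2 * (4 - (4 : ℝ) ^ H))))
      (Set.Ioo (0 : ℝ) 1)
      (Set.Ioo (Real.sin (-2 / 3) / Real.exp 1)
        (Real.sin (-2 + 9 / 8 * (Real.log 9 / Real.log 4)) / Real.exp 1)) ∧
    Set.Ioo (-2 / 3 : ℝ) (-2 + 9 / 8 * (Real.log 9 / Real.log 4)) ⊆
      Set.Ioo (-(Real.pi / 2)) 0 := by
  have hπ := Real.pi_gt_three
  have hBneg := B_neg
  have hAB := A_lt_B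
  have epos := Real.exp_pos 1
  have key : ∀ s : ℝ, Real.exp (-1) * s = s / Real.exp 1 := by
    intro s; rw [Real.exp_neg]; exact inv_mul_eq_div _ _
  have mA : (-2 / 3 : ℝ) ∈ Set.Icc (-(π / 2)) (π / 2) := ⟨by linarith, by linarith⟩
  have mB : (-2 + 9 / 8 * (Real.log 9 / Real.log 4)) ∈ Set.Icc (-(π / 2)) (π / 2) :=
    ⟨by linarith, by linarith⟩
  have mρ : ∀ x ∈ Set.Ioo (0 : ℝ) 1, rho x ∈ Set.Icc (-(π / 2)) (π / 2) := by
    intro x hx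
    obtain ⟨h1, h2⟩ := rho_mem x hx
    exact ⟨by linarith, by linarith⟩
  have hmono : StrictMonoOn (fun H : ℝ => Real.exp (-1) * Real.sin (rho H))
      (Set.Ioo (0 : ℝ) 1) := by
    intro x hx y hy hxy
    have hs : Real.sin (rho x) < Real.sin (rho y) :=
      Real.strictMonoOn_sin (mρ x hx) (mρ y hy) (rho_strictMono hx hy hxy)
    exact mul_lt_mul_of_pos_left hs (Real.exp_pos _)
  have houter : Continuous (fun t : ℝ => Real.exp (-1) * Real.sin t) :=
    continuous_const.mul Real.continuous_sin
  have hT0 : Tendsto (fun H : ℝ => Real.exp (-1) * Real.sin (rho H)) (𝓝[>] (0 : ℝ))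
      (𝓝 (Real.sin (-2 / 3) / Real.exp 1)) := by
    have h := (houter.tendsto (-2 / 3 : ℝ)).comp rho_tendsto_zero
    rwa [key] at h
  have hT1 : Tendsto (fun H : ℝ => Real.exp (-1) * Real.sin (rho H)) (𝓝[<] (1 : ℝ))
      (𝓝 (Real.sin (-2 + 9 / 8 * (Real.log 9 / Real.log 4)) / Real.exp 1)) := by
    have h := (houter.tendsto (-2 + 9 / 8 * (Real.log 9 / Real.log 4))).comp rho_tendsto_one
    rwa [key] at h
  have hmaps : Set.MapsTo (fun H : ℝ => Real.exp (-1) * Real.sin (rho H))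
      (Set.Ioo (0 : ℝ) 1)
      (Set.Ioo (Real.sin (-2 / 3) / Real.exp 1)
        (Real.sin (-2 + 9 / 8 * (Real.log 9 / Real.log 4)) / Real.exp 1)) := by
    intro x hx
    obtain ⟨h1, h2⟩ := rho_mem x hx
    have hs1 : Real.sin (-2 / 3) < Real.sin (rho x) :=
      Real.strictMonoOn_sin mA (mρ x hx) h1
    have hs2 : Real.sin (rho x) < Real.sin (-2 + 9 / 8 * (Real.log 9 / Real.log 4)) :=
      Real.strictMonoOn_sin (mρ x hx) mB h2
    simp only [Set.mem_Ioo, key]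
    exact ⟨by gcongr, by gcongr⟩
  have hcontOn : ContinuousOn (fun H : ℝ => Real.exp (-1) * Real.sin (rho H))
      (Set.Ioo (0 : ℝ) 1) := houter.comp_continuousOn rho_cont
  have hsurj : Set.SurjOn (fun H : ℝ => Real.exp (-1) * Real.sin (rho H))
      (Set.Ioo (0 : ℝ) 1)
      (Set.Ioo (Real.sin (-2 / 3) / Real.exp 1)
        (Real.sin (-2 + 9 / 8 * (Real.log 9 / Real.log 4)) / Real.exp 1)) := by
    intro y hy
    obtain ⟨hy1, hy2⟩ := hy
    obtain ⟨x₁, hx₁y, hx₁m⟩ := ((hT0.eventually_lt_const hy1).and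
      (Ioo_mem_nhdsGT_of_mem (show (0 : ℝ) ∈ Set.Ico (0 : ℝ) 1 by norm_num))).exists
    obtain ⟨x₂, hx₂y, hx₂m⟩ := ((hT1.eventually_const_lt hy2).and
      (Ioo_mem_nhdsLT_of_mem (show (1 : ℝ) ∈ Set.Ioc (0 : ℝ) 1 by norm_num))).exists
    have hx12 : x₁ < x₂ := by
      by_contra h
      push_neg at h
      have := hmono.monotoneOn hx₂m hx₁m h
      linarith
    have hsub : Set.Icc x₁ x₂ ⊆ Set.Ioo (0 : ℝ) 1 := fun t ht =>
      ⟨lt_of_lt_of_le hx₁m.1 ht.1, lt_of_le_of_lt ht.2 hx₂m.2⟩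
    obtain ⟨x, hxm, hxy⟩ := intermediate_value_Icc hx12.le (hcontOn.mono hsub)
      ⟨hx₁y.le, hx₂y.le⟩
    exact ⟨x, hsub hxm, hxy⟩
  exact ⟨hmono, ⟨hmaps, hmono.injOn, hsurj⟩,
    fun y hy => ⟨by linarith [hy.1], lt_of_lt_of_le hy.2 hBneg.le⟩⟩
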